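/- arXiv:2512.13972 — 6 statements merged into one kernel-verified Lean document; each statement's English description precedes it below -/
import Mathlib

section
/- For Borel probability measures μ, ν on ℝ with distribution functions F_μ, F_ν, the function F(x) = max{t·F_μ(x) − (t−1), 0} is a cumulative distribution function on ℝ for every real t ≥ 1. -/
/-!
For `t ≥ 1` the map `y ↦ max (t y - (t - 1)) 0` is monotone, continuous and fixes `0` and `1`,
so composing it with `F_μ` preserves monotonicity, right continuity and the limits at `∓∞`.
-/

open MeasureTheory ProbabilityTheory Filter Topology

namespace StieltjesFunction

variable {R : Type*} [LinearOrder R] [TopologicalSpace R]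

protected def comp {φ : ℝ → ℝ} (hmono : Monotone φ) (hcont : Continuous φ)
    (f : StieltjesFunction R) : StieltjesFunction R where
  toFun := φ ∘ f
  mono' := hmono.comp f.mono
  right_continuous' x := hcont.continuousAt.comp_continuousWithinAt (f.right_continuous x)

end StieltjesFunction

/-- `freeMaxPowMap t ∘ F_μ` is the distribution function of `μ^{⊠∨ t}`. -/
noncomputable def freeMaxPowMap (t y : ℝ) : ℝ := max (t * y - (t - 1)) 0

theorem monotone_freeMaxPowMap {t : ℝ} (ht : 0 ≤ t) : Monotone (freeMaxPowMap t) :=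
  fun _ _ hab => max_le_max_right 0 (by gcongr)

theorem continuous_freeMaxPowMap (t : ℝ) : Continuous (freeMaxPowMap t) := by
  unfold freeMaxPowMap
  fun_prop

theorem freeMaxPowMap_zero {t : ℝ} (ht : 1 ≤ t) : freeMaxPowMap t 0 = 0 :=
  max_eq_right (by linarith)

theorem freeMaxPowMap_one (t : ℝ) : freeMaxPowMap t 1 = 1 := by
  simp [freeMaxPowMap]

theorem freeMaxPow_cdf_general (μ : Measure ℝ) (t : ℝ) (ht : 1 ≤ t)
    (F : ℝ → ℝ) (hF : ∀ x, F x = max (t * cdf μ x - (t - 1)) 0) :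
    Monotone F ∧ (∀ x, ContinuousWithinAt F (Set.Ici x) x) ∧
      Tendsto F atBot (nhds 0) ∧ Tendsto F atTop (nhds 1) := by
  have hφ := continuous_freeMaxPowMap t
  let G := (cdf μ).comp (monotone_freeMaxPowMap (zero_le_one.trans ht)) hφ
  obtain rfl : F = G := funext hF
  refine ⟨G.mono, G.right_continuous, ?_, ?_⟩
  · have h := (hφ.tendsto 0).comp (tendsto_cdf_atBot μ)
    rwa [freeMaxPowMap_zero ht] at h
  · have h := (hφ.tendsto 1).comp (tendsto_cdf_atTop μ)
    rwa [freeMaxPowMap_one] at h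

theorem freeMaxPow_cdf (μ : Measure ℝ) [IsProbabilityMeasure μ] (t : ℝ) (ht : 1 ≤ t)
    (F : ℝ → ℝ) (hF : ∀ x, F x = max (t * cdf μ x - (t - 1)) 0) :
    Monotone F ∧ (∀ x, ContinuousWithinAt F (Set.Ici x) x) ∧
      Tendsto F atBot (nhds 0) ∧ Tendsto F atTop (nhds 1) :=
  freeMaxPow_cdf_general μ t ht F hF
end

section
/- For any Borel probability measures σ₁, σ₂, μ on ℝ, one has 𝔸^∨_{σ₁}(𝔸^∨_{σ₂}(μ)) = 𝔸^∨_{σ₁ ∨ σ₂}(μ), i.e., the composition of the subordination operations equals the subordination operation with respect to the max-convolution σ₁ ∨ σ₂. -/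
open MeasureTheory ProbabilityTheory Filter Topology

/-- The subordination distribution function for free max-convolution:
`max {1 - (1 - Fμ)/Fσ, 0}`, set to `0` where `Fσ = 0`. -/
noncomputable def subFn (Fμ Fσ : ℝ → ℝ) (x : ℝ) : ℝ :=
  if Fσ x = 0 then 0 else max (1 - (1 - Fμ x) / Fσ x) 0

theorem subordination_comp (σ₁ σ₂ μ : Measure ℝ)
    [IsProbabilityMeasure σ₁] [IsProbabilityMeasure σ₂] [IsProbabilityMeasure μ]
    (A₂ s A L : Measure ℝ)
    [IsProbabilityMeasure A₂] [IsProbabilityMeasure s] [IsProbabilityMeasure A]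
    [IsProbabilityMeasure L]
    -- A₂ = 𝔸^∨_{σ₂}(μ)
    (hA₂ : ∀ x, cdf A₂ x = subFn (cdf μ) (cdf σ₂) x)
    -- L = 𝔸^∨_{σ₁}(A₂) = (𝔸^∨_{σ₁} ∘ 𝔸^∨_{σ₂})(μ)
    (hL : ∀ x, cdf L x = subFn (cdf A₂) (cdf σ₁) x)
    -- s = σ₁ ∨ σ₂
    (hs : ∀ x, cdf s x = cdf σ₁ x * cdf σ₂ x)
    -- A = 𝔸^∨_{σ₁ ∨ σ₂}(μ)
    (hA : ∀ x, cdf A x = subFn (cdf μ) (cdf s) x) :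
    L = A := by
  refine MeasureTheory.Measure.eq_of_cdf L A (StieltjesFunction.ext_iff.mpr ?_)
  intro x
  rw [hL x, hA x]
  have h1 : (0:ℝ) ≤ cdf σ₁ x := cdf_nonneg _ _
  have h2 : (0:ℝ) ≤ cdf σ₂ x := cdf_nonneg _ _
  have h1' : cdf σ₁ x ≤ 1 := cdf_le_one _ _
  have h2' : cdf σ₂ x ≤ 1 := cdf_le_one _ _
  have hm : (0:ℝ) ≤ 1 - cdf μ x := by linarith [cdf_le_one μ x]
  simp only [subFn, hA₂ x, hs x]
  rcases eq_or_lt_of_le h1 with e1 | p1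
  · simp [← e1]
  rcases eq_or_lt_of_le h2 with e2 | p2
  · -- cdf σ₂ x = 0 : A₂ cdf is 0, both sides 0
    have h0 : 1 - (1 - (0:ℝ)) / cdf σ₁ x ≤ 0 := by
      rw [sub_nonpos, le_div_iff₀ p1]; linarith
    rw [← e2]
    simp [ne_of_gt p1, max_eq_right h0]
    exact (one_le_inv₀ p1).mpr h1'
  · rw [if_neg (ne_of_gt p1), if_neg (ne_of_gt p2), if_neg (ne_of_gt (mul_pos p1 p2))]
    rcases le_or_gt ((1 - cdf μ x) / cdf σ₂ x) 1 with hle | hgt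
    · have : max (1 - (1 - cdf μ x) / cdf σ₂ x) 0 = 1 - (1 - cdf μ x) / cdf σ₂ x :=
        max_eq_left (by linarith)
      rw [this]
      have : (1 - (1 - (1 - cdf μ x) / cdf σ₂ x)) / cdf σ₁ x
          = (1 - cdf μ x) / (cdf σ₁ x * cdf σ₂ x) := by
        rw [show 1 - (1 - (1 - cdf μ x) / cdf σ₂ x) = (1 - cdf μ x) / cdf σ₂ x by ring]
        rw [div_div, mul_comm]
      rw [this]
    · -- inner max is 0, both sides 0
      have : max (1 - (1 - cdf μ x) / cdf σ₂ x) 0 = 0 := max_eq_right (by linarith)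
      rw [this]
      have hL0 : 1 - (1 - 0) / cdf σ₁ x ≤ 0 := by
        rw [sub_nonpos, le_div_iff₀ p1]; linarith
      have hR0 : 1 - (1 - cdf μ x) / (cdf σ₁ x * cdf σ₂ x) ≤ 0 := by
        rw [sub_nonpos, le_div_iff₀ (mul_pos p1 p2)]
        have := (lt_div_iff₀ p2).mp hgt
        nlinarith
      rw [max_eq_right hL0, max_eq_right hR0]
end

section
/- For any Borel probability measures σ, μ₁, μ₂ on ℝ, one has 𝔸^∨_σ(μ₁ ⊠∨ μ₂) = 𝔸^∨_σ(μ₁) ⊠∨ 𝔸^∨_σ(μ₂), i.e., the subordination operation is a homomorphism with respect to free max-convolution. -/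
/-!
Pass to tails `u = 1 - F`. Free max-convolution becomes truncated addition `min (u + v) 1`,
and subordination by `σ` becomes truncated scaling `min (u / s) 1` with `s = F_σ(x) ∈ (0, 1]`.
Truncation at `1` is compatible with addition of nonnegative numbers and with multiplication by
a factor `1 / s ≥ 1`, so the two operations commute pointwise.
-/

open MeasureTheory ProbabilityTheory Filter Topology

section Truncation
variable {K : Type*} [Field K] [LinearOrder K] [IsStrictOrderedRing K]

theorem min_add_min_one {x y : K} (hx : 0 ≤ x) (hy : 0 ≤ y) :
    min (min x 1 + min y 1) 1 = min (x + y) 1 := by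
  grind

theorem min_mul_min_one {c x : K} (hc : 1 ≤ c) : min (c * min x 1) 1 = min (c * x) 1 := by
  rcases le_total x 1 with hx1 | hx1
  · rw [min_eq_left hx1]
  · rw [min_eq_right hx1, mul_one, min_eq_right hc, min_eq_right]
    nlinarith

theorem max_one_sub_zero (t : K) : max (1 - t) 0 = 1 - min t 1 := by
  rw [← max_sub_sub_left, sub_self]

theorem min_div_min_add_one {s u v : K} (hs0 : 0 < s) (hs1 : s ≤ 1) (hu : 0 ≤ u)
    (hv : 0 ≤ v) :
    min (min (u + v) 1 / s) 1 = min (min (u / s) 1 + min (v / s) 1) 1 := by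
  calc min (min (u + v) 1 / s) 1 = min (s⁻¹ * min (u + v) 1) 1 := by rw [div_eq_inv_mul]
    _ = min (s⁻¹ * (u + v)) 1 := min_mul_min_one ((one_le_inv₀ hs0).2 hs1)
    _ = min (u / s + v / s) 1 := by rw [mul_add, div_eq_inv_mul, div_eq_inv_mul]
    _ = min (min (u / s) 1 + min (v / s) 1) 1 :=
      (min_add_min_one (div_nonneg hu hs0.le) (div_nonneg hv hs0.le)).symm

theorem max_one_sub_div_max_add_sub_one {s a b : K} (hs0 : 0 < s) (hs1 : s ≤ 1) (ha : a ≤ 1)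
    (hb : b ≤ 1) :
    max (1 - (1 - max (a + b - 1) 0) / s) 0 =
      max (max (1 - (1 - a) / s) 0 + max (1 - (1 - b) / s) 0 - 1) 0 := by
  have hab : max (a + b - 1) 0 = 1 - min ((1 - a) + (1 - b)) 1 := by
    rw [← max_one_sub_zero]; congr 1; ring
  calc max (1 - (1 - max (a + b - 1) 0) / s) 0
      = 1 - min (min ((1 - a) + (1 - b)) 1 / s) 1 := by rw [hab, sub_sub_cancel, max_one_sub_zero]
    _ = 1 - min (min ((1 - a) / s) 1 + min ((1 - b) / s) 1) 1 := by
      rw [min_div_min_add_one hs0 hs1 (sub_nonneg.2 ha) (sub_nonneg.2 hb)]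
    _ = max (max (1 - (1 - a) / s) 0 + max (1 - (1 - b) / s) 0 - 1) 0 := by
      rw [← max_one_sub_zero, max_one_sub_zero ((1 - a) / s), max_one_sub_zero ((1 - b) / s)]
      congr 1; ring

end Truncation

theorem subFn_freeMaxConv {F G S : ℝ → ℝ} {x : ℝ} (hF : F x ≤ 1) (hG : G x ≤ 1)
    (hS0 : 0 ≤ S x) (hS1 : S x ≤ 1) :
    subFn (fun y ↦ max (F y + G y - 1) 0) S x = max (subFn F S x + subFn G S x - 1) 0 := by
  unfold subFn
  split_ifs with hS
  · simp
  · exact max_one_sub_div_max_add_sub_one (hS0.lt_of_ne' hS) hS1 hF hG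

theorem subordination_freeMaxConv_hom_general (σ μ₁ μ₂ : Measure ℝ)
    (m A₁ A₂ L R : Measure ℝ)
    [IsProbabilityMeasure L] [IsProbabilityMeasure R]
    -- m = μ₁ ⊠∨ μ₂
    (hm : ∀ x, cdf m x = max (cdf μ₁ x + cdf μ₂ x - 1) 0)
    -- L = 𝔸^∨_σ(μ₁ ⊠∨ μ₂)
    (hL : ∀ x, cdf L x = subFn (cdf m) (cdf σ) x)
    -- A₁ = 𝔸^∨_σ(μ₁), A₂ = 𝔸^∨_σ(μ₂)
    (hA₁ : ∀ x, cdf A₁ x = subFn (cdf μ₁) (cdf σ) x)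
    (hA₂ : ∀ x, cdf A₂ x = subFn (cdf μ₂) (cdf σ) x)
    -- R = 𝔸^∨_σ(μ₁) ⊠∨ 𝔸^∨_σ(μ₂)
    (hR : ∀ x, cdf R x = max (cdf A₁ x + cdf A₂ x - 1) 0) :
    L = R := by
  refine Measure.eq_of_cdf L R (StieltjesFunction.ext fun x ↦ ?_)
  rw [hL, funext hm, subFn_freeMaxConv (cdf_le_one μ₁ x) (cdf_le_one μ₂ x) (cdf_nonneg σ x)
    (cdf_le_one σ x), hR, hA₁, hA₂]

theorem subordination_freeMaxConv_hom (σ μ₁ μ₂ : Measure ℝ)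
    [IsProbabilityMeasure σ] [IsProbabilityMeasure μ₁] [IsProbabilityMeasure μ₂]
    (m A₁ A₂ L R : Measure ℝ)
    [IsProbabilityMeasure m] [IsProbabilityMeasure A₁] [IsProbabilityMeasure A₂]
    [IsProbabilityMeasure L] [IsProbabilityMeasure R]
    -- m = μ₁ ⊠∨ μ₂
    (hm : ∀ x, cdf m x = max (cdf μ₁ x + cdf μ₂ x - 1) 0)
    -- L = 𝔸^∨_σ(μ₁ ⊠∨ μ₂)
    (hL : ∀ x, cdf L x = subFn (cdf m) (cdf σ) x)
    -- A₁ = 𝔸^∨_σ(μ₁), A₂ = 𝔸^∨_σ(μ₂)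
    (hA₁ : ∀ x, cdf A₁ x = subFn (cdf μ₁) (cdf σ) x)
    (hA₂ : ∀ x, cdf A₂ x = subFn (cdf μ₂) (cdf σ) x)
    -- R = 𝔸^∨_σ(μ₁) ⊠∨ 𝔸^∨_σ(μ₂)
    (hR : ∀ x, cdf R x = max (cdf A₁ x + cdf A₂ x - 1) 0) :
    L = R :=
  subordination_freeMaxConv_hom_general σ μ₁ μ₂ m A₁ A₂ L R hm hL hA₁ hA₂ hR
end

section
/- For any Borel probability measures σ, μ on ℝ and any real t ≥ 1, one has 𝔸^∨_σ(μ^{⊠∨ t}) = (𝔸^∨_σ(μ))^{⊠∨ t}, i.e., the subordination operation commutes with the free max-convolution power. -/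
open MeasureTheory ProbabilityTheory Filter Topology

/-!
Both operations act pointwise on distribution functions, as an affine map fixing `1` followed
by truncation at `0`: `v ↦ 1 - (1 - v) / s` for subordination (with `s = F_σ(x) ∈ (0, 1]`) and
`v ↦ 1 - t (1 - v)` for the max-convolution power. Affine maps fixing `1` commute, and
truncating the argument of a monotone map `f` with `f 0 ≤ 0` changes nothing after the outer
truncation, so both composites equal the truncation of `v ↦ 1 - (t / s) (1 - v)`.
-/

def dilateAboutOne (c v : ℝ) : ℝ := 1 - c * (1 - v)

lemma dilateAboutOne_dilateAboutOne (c d v : ℝ) :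
    dilateAboutOne c (dilateAboutOne d v) = dilateAboutOne (c * d) v := by
  unfold dilateAboutOne
  ring

lemma dilateAboutOne_comm (c d v : ℝ) :
    dilateAboutOne c (dilateAboutOne d v) = dilateAboutOne d (dilateAboutOne c v) := by
  rw [dilateAboutOne_dilateAboutOne, dilateAboutOne_dilateAboutOne, mul_comm]

lemma monotone_dilateAboutOne {c : ℝ} (hc : 0 ≤ c) : Monotone (dilateAboutOne c) :=
  fun a b hab => by
    unfold dilateAboutOne
    nlinarith

lemma dilateAboutOne_zero_nonpos {c : ℝ} (hc : 1 ≤ c) : dilateAboutOne c 0 ≤ 0 := by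
  unfold dilateAboutOne
  linarith

lemma max_apply_max_zero_zero {f : ℝ → ℝ} (hf : Monotone f) (hf0 : f 0 ≤ 0) (v : ℝ) :
    max (f (max v 0)) 0 = max (f v) 0 := by
  rcases le_total 0 v with hv | hv
  · rw [max_eq_left hv]
  · rw [max_eq_right hv, max_eq_right hf0, max_eq_right ((hf hv).trans hf0)]

lemma max_dilateAboutOne_comm {c d : ℝ} (hc : 1 ≤ c) (hd : 1 ≤ d) (v : ℝ) :
    max (dilateAboutOne c (max (dilateAboutOne d v) 0)) 0 =
      max (dilateAboutOne d (max (dilateAboutOne c v) 0)) 0 := by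
  rw [max_apply_max_zero_zero (monotone_dilateAboutOne (by linarith)) (dilateAboutOne_zero_nonpos hc),
    max_apply_max_zero_zero (monotone_dilateAboutOne (by linarith)) (dilateAboutOne_zero_nonpos hd),
    dilateAboutOne_comm]

lemma subFn_max_mul_sub {Fμ Fσ : ℝ → ℝ} {t : ℝ} (ht : 1 ≤ t) (hσ₀ : ∀ x, 0 ≤ Fσ x)
    (hσ₁ : ∀ x, Fσ x ≤ 1) (x : ℝ) :
    subFn (fun y => max (t * Fμ y - (t - 1)) 0) Fσ x = max (t * subFn Fμ Fσ x - (t - 1)) 0 := by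
  unfold subFn
  split_ifs with hσ
  · simp only [mul_zero, zero_sub, neg_sub]
    exact (max_eq_right (by linarith)).symm
  · have hs : 0 < Fσ x := (hσ₀ x).lt_of_ne' hσ
    have hsub : ∀ v, 1 - (1 - v) / Fσ x = dilateAboutOne (Fσ x)⁻¹ v := fun v => by
      unfold dilateAboutOne
      ring
    have hpow : ∀ v, t * v - (t - 1) = dilateAboutOne t v := fun v => by
      unfold dilateAboutOne
      ring
    simp only [hsub, hpow]
    exact max_dilateAboutOne_comm (one_le_inv₀ hs |>.mpr (hσ₁ x)) ht _

theorem subordination_freeMaxPow_general (σ μ : Measure ℝ)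
    (t : ℝ) (ht : 1 ≤ t)
    (m A L R : Measure ℝ)
    [IsProbabilityMeasure L] [IsProbabilityMeasure R]
    -- m = μ^{⊠∨ t}
    (hm : ∀ x, cdf m x = max (t * cdf μ x - (t - 1)) 0)
    -- L = 𝔸^∨_σ(μ^{⊠∨ t})
    (hL : ∀ x, cdf L x = subFn (cdf m) (cdf σ) x)
    -- A = 𝔸^∨_σ(μ)
    (hA : ∀ x, cdf A x = subFn (cdf μ) (cdf σ) x)
    -- R = (𝔸^∨_σ(μ))^{⊠∨ t}
    (hR : ∀ x, cdf R x = max (t * cdf A x - (t - 1)) 0) :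
    L = R := by
  have hm' : (cdf m : ℝ → ℝ) = fun x => max (t * cdf μ x - (t - 1)) 0 := funext hm
  refine Measure.eq_of_cdf L R (StieltjesFunction.ext fun x => ?_)
  rw [hL, hR, hA, hm', subFn_max_mul_sub ht (cdf_nonneg σ) (cdf_le_one σ)]

theorem subordination_freeMaxPow (σ μ : Measure ℝ)
    [IsProbabilityMeasure σ] [IsProbabilityMeasure μ]
    (t : ℝ) (ht : 1 ≤ t)
    (m A L R : Measure ℝ)
    [IsProbabilityMeasure m] [IsProbabilityMeasure A]
    [IsProbabilityMeasure L] [IsProbabilityMeasure R]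
    -- m = μ^{⊠∨ t}
    (hm : ∀ x, cdf m x = max (t * cdf μ x - (t - 1)) 0)
    -- L = 𝔸^∨_σ(μ^{⊠∨ t})
    (hL : ∀ x, cdf L x = subFn (cdf m) (cdf σ) x)
    -- A = 𝔸^∨_σ(μ)
    (hA : ∀ x, cdf A x = subFn (cdf μ) (cdf σ) x)
    -- R = (𝔸^∨_σ(μ))^{⊠∨ t}
    (hR : ∀ x, cdf R x = max (t * cdf A x - (t - 1)) 0) :
    L = R :=
  subordination_freeMaxPow_general σ μ t ht m A L R hm hL hA hR
end

section
/- For any Borel probability measures σ, μ supported on [0,∞), one has σ ⊠∨ μ = 𝔸^∨_σ(μ) ∪∨ 𝔸^∨_μ(σ), i.e., the free max-convolution equals the Boolean max-convolution of the two subordination measures. -/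
open MeasureTheory ProbabilityTheory Filter Topology

/-- The Boolean max-convolution distribution function:
`F G / (F + G - F G)`, set to `0` whenever `F = 0` or `G = 0`. -/
noncomputable def boolFn (F G : ℝ → ℝ) (x : ℝ) : ℝ :=
  if F x = 0 ∨ G x = 0 then 0 else F x * G x / (F x + G x - F x * G x)

/-! Writing `s = F + G - 1`, both subordination functions vanish where `s ≤ 0` and equal `s / F`,
`s / G` where `s > 0`; their Boolean combination is then `s / (F + G - s) = s`. -/

lemma subFn_eq_zero_of_add_le_one {F G : ℝ → ℝ} {x : ℝ} (hF : 0 ≤ F x)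
    (h : F x + G x ≤ 1) : subFn G F x = 0 := by
  unfold subFn
  split_ifs with hF0
  · rfl
  · have hFpos : 0 < F x := lt_of_le_of_ne hF (Ne.symm hF0)
    refine max_eq_right ?_
    rw [sub_nonpos, le_div_iff₀ hFpos]
    linarith

lemma subFn_eq_div_of_one_lt_add {F G : ℝ → ℝ} {x : ℝ} (hG : G x ≤ 1)
    (h : 1 < F x + G x) : subFn G F x = (F x + G x - 1) / F x := by
  have hFpos : 0 < F x := by linarith
  have hdiv : 1 - (1 - G x) / F x = (F x + G x - 1) / F x := by
    field_simp
    ring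
  rw [subFn, if_neg hFpos.ne', hdiv, max_eq_left (by positivity)]

lemma boolFn_subFn_eq {F G : ℝ → ℝ} {x : ℝ} (hF₀ : 0 ≤ F x)
    (hF₁ : F x ≤ 1) (hG₁ : G x ≤ 1) :
    boolFn (subFn G F) (subFn F G) x = max (F x + G x - 1) 0 := by
  rcases le_or_gt (F x + G x) 1 with h | h
  · rw [boolFn, subFn_eq_zero_of_add_le_one hF₀ h, if_pos (Or.inl rfl)]
    exact (max_eq_right (by linarith)).symm
  · have hF : 0 < F x := by linarith
    have hG : 0 < G x := by linarith
    have hs : 0 < F x + G x - 1 := by linarith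
    have hGF := subFn_eq_div_of_one_lt_add hG₁ h
    have hFG : subFn F G x = (F x + G x - 1) / G x := by
      rw [subFn_eq_div_of_one_lt_add hF₁ (by linarith), add_comm (G x)]
    rw [boolFn, hGF, hFG, if_neg (not_or.mpr ⟨(div_pos hs hF).ne', (div_pos hs hG).ne'⟩),
      max_eq_left hs.le]
    field_simp
    ring

theorem freeMax_eq_boolMax_of_subordinations_general (σ μ : Measure ℝ)
    (A B L R : Measure ℝ)
    [IsProbabilityMeasure L] [IsProbabilityMeasure R]
    -- A = 𝔸^∨_σ(μ), B = 𝔸^∨_μ(σ)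
    (hA : ∀ x, cdf A x = subFn (cdf μ) (cdf σ) x)
    (hB : ∀ x, cdf B x = subFn (cdf σ) (cdf μ) x)
    -- L = σ ⊠∨ μ
    (hL : ∀ x, cdf L x = max (cdf σ x + cdf μ x - 1) 0)
    -- R = 𝔸^∨_σ(μ) ∪∨ 𝔸^∨_μ(σ)
    (hR : ∀ x, cdf R x = boolFn (cdf A) (cdf B) x) :
    L = R := by
  refine Measure.eq_of_cdf L R (StieltjesFunction.ext fun x ↦ ?_)
  rw [hL, hR, funext hA, funext hB]
  exact (boolFn_subFn_eq (cdf_nonneg σ x) (cdf_le_one σ x) (cdf_le_one μ x)).symm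

theorem freeMax_eq_boolMax_of_subordinations (σ μ : Measure ℝ)
    [IsProbabilityMeasure σ] [IsProbabilityMeasure μ]
    -- σ and μ are supported on [0,∞)
    (hσ : σ (Set.Iio 0) = 0) (hμ : μ (Set.Iio 0) = 0)
    (A B L R : Measure ℝ)
    [IsProbabilityMeasure A] [IsProbabilityMeasure B]
    [IsProbabilityMeasure L] [IsProbabilityMeasure R]
    -- A = 𝔸^∨_σ(μ), B = 𝔸^∨_μ(σ)
    (hA : ∀ x, cdf A x = subFn (cdf μ) (cdf σ) x)
    (hB : ∀ x, cdf B x = subFn (cdf σ) (cdf μ) x)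
    -- L = σ ⊠∨ μ
    (hL : ∀ x, cdf L x = max (cdf σ x + cdf μ x - 1) 0)
    -- R = 𝔸^∨_σ(μ) ∪∨ 𝔸^∨_μ(σ)
    (hR : ∀ x, cdf R x = boolFn (cdf A) (cdf B) x) :
    L = R :=
  freeMax_eq_boolMax_of_subordinations_general σ μ A B L R hA hB hL hR
end

section
/- The Boolean max-convolution of probability measures on [0,∞) is commutative and associative, with distribution function of μ ∪∨ ν ∪∨ ρ given by F_μF_νF_ρ / (F_νF_ρ + F_μF_ρ + F_μF_ν − 2F_μF_νF_ρ) where all of F_μ, F_ν, F_ρ are positive, and 0 otherwise. -/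
open MeasureTheory ProbabilityTheory Filter Topology

/-- `IsBoolMaxConv μ ν ρ` means `ρ = μ ∪∨ ν`, the Boolean max-convolution. -/
def IsBoolMaxConv (μ ν ρ : Measure ℝ) : Prop :=
  ∀ x : ℝ, cdf ρ x = boolFn (cdf μ) (cdf ν) x

lemma boolFn_symm (F G : ℝ → ℝ) (x : ℝ) : boolFn F G x = boolFn G F x := by
  unfold boolFn
  by_cases h : F x = 0 ∨ G x = 0
  · rw [if_pos h, if_pos h.symm]
  · rw [if_neg h, if_neg (fun hc => h hc.symm)]; ring_nf

lemma boolFn_congr {F G F' G' : ℝ → ℝ} {x : ℝ} (hF : F x = F' x) (hG : G x = G' x) :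
    boolFn F G x = boolFn F' G' x := by
  unfold boolFn; rw [hF, hG]

lemma triple_formula (F G H : ℝ → ℝ) (x : ℝ)
    (hF0 : 0 ≤ F x) (hF1 : F x ≤ 1) (hG0 : 0 ≤ G x) (hG1 : G x ≤ 1)
    (hH0 : 0 ≤ H x) (hH1 : H x ≤ 1) :
    boolFn (boolFn F G) H x =
      if 0 < F x ∧ 0 < G x ∧ 0 < H x then
        F x * G x * H x /
          (G x * H x + F x * H x + F x * G x - 2 * (F x * G x * H x))
      else 0 := by
  set f := F x with hf
  set g := G x with hg
  set h := H x with hh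
  by_cases hf0 : f = 0
  · rw [if_neg (by push_neg; intro h1; exact absurd h1.le (not_le.2 (hf0 ▸ h1)))]
    unfold boolFn
    rw [if_pos (Or.inl (by rw [if_pos (Or.inl hf0)]))]
  by_cases hg0 : g = 0
  · rw [if_neg (by push_neg; intro _ h1; exact absurd h1.le (not_le.2 (hg0 ▸ h1)))]
    unfold boolFn
    rw [if_pos (Or.inl (by rw [if_pos (Or.inr hg0)]))]
  by_cases hh0 : h = 0
  · rw [if_neg (by push_neg; intro _ _; exact le_of_eq hh0)]
    unfold boolFn
    rw [if_pos (Or.inr hh0)]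
  have hfp : 0 < f := lt_of_le_of_ne hF0 (Ne.symm hf0)
  have hgp : 0 < g := lt_of_le_of_ne hG0 (Ne.symm hg0)
  have hhp : 0 < h := lt_of_le_of_ne hH0 (Ne.symm hh0)
  rw [if_pos ⟨hfp, hgp, hhp⟩]
  have hd1 : 0 < f + g - f * g := by nlinarith
  have hA : boolFn F G x = f * g / (f + g - f * g) := by
    unfold boolFn; rw [if_neg (by push_neg; exact ⟨hf0, hg0⟩)]
  have hAp : 0 < boolFn F G x := by rw [hA]; positivity
  have hd2 : 0 < g * h + f * h + f * g - 2 * (f * g * h) := by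
    nlinarith [mul_nonneg (mul_nonneg hF0 hG0) (sub_nonneg.2 hH1), mul_pos hhp hd1]
  unfold boolFn
  rw [if_neg (by push_neg; exact ⟨hAp.ne', hh0⟩)]
  show boolFn F G x * h / (boolFn F G x + h - boolFn F G x * h) = _
  rw [hA]
  have key : f * g / (f + g - f * g) + h - f * g / (f + g - f * g) * h =
      (g * h + f * h + f * g - 2 * (f * g * h)) / (f + g - f * g) := by
    field_simp
    ring
  rw [key, div_mul_eq_mul_div, div_div_div_eq, mul_comm (f + g - f * g),
    mul_div_mul_right _ _ hd1.ne']

theorem boolMaxConv_comm_assoc (μ ν ρ : Measure ℝ)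
    [IsProbabilityMeasure μ] [IsProbabilityMeasure ν] [IsProbabilityMeasure ρ]
    (hμ : μ (Set.Iio 0) = 0) (hν : ν (Set.Iio 0) = 0) (hρ : ρ (Set.Iio 0) = 0) :
    -- commutativity
    (∀ (a b : Measure ℝ), IsProbabilityMeasure a → IsProbabilityMeasure b →
      IsBoolMaxConv μ ν a → IsBoolMaxConv ν μ b → a = b) ∧
    -- associativity, with the explicit triple formula
    (∀ (a b c d : Measure ℝ), IsProbabilityMeasure a → IsProbabilityMeasure b →
      IsProbabilityMeasure c → IsProbabilityMeasure d →
      IsBoolMaxConv μ ν a → IsBoolMaxConv a ρ b →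
      IsBoolMaxConv ν ρ c → IsBoolMaxConv μ c d →
      b = d ∧
      ∀ x : ℝ, cdf b x =
        if 0 < cdf μ x ∧ 0 < cdf ν x ∧ 0 < cdf ρ x then
          cdf μ x * cdf ν x * cdf ρ x /
            (cdf ν x * cdf ρ x + cdf μ x * cdf ρ x + cdf μ x * cdf ν x -
              2 * (cdf μ x * cdf ν x * cdf ρ x))
        else 0) := by
  constructor
  · intro a b ha hb hab hba
    refine Measure.eq_of_cdf a b (StieltjesFunction.ext fun x => ?_)
    rw [hab x, hba x, boolFn_symm]
  · intro a b c d ha hb hc hd hμνa haρb hνρc hμcd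
    have hb' : ∀ x : ℝ, cdf b x = boolFn (boolFn (cdf μ) (cdf ν)) (cdf ρ) x :=
      fun x => (haρb x).trans (boolFn_congr (hμνa x) rfl)
    have hd' : ∀ x : ℝ, cdf d x = boolFn (boolFn (cdf ν) (cdf ρ)) (cdf μ) x :=
      fun x => (hμcd x).trans ((boolFn_congr rfl (hνρc x)).trans (boolFn_symm _ _ _))
    have hbform : ∀ x : ℝ, cdf b x =
        if 0 < cdf μ x ∧ 0 < cdf ν x ∧ 0 < cdf ρ x then
          cdf μ x * cdf ν x * cdf ρ x /
            (cdf ν x * cdf ρ x + cdf μ x * cdf ρ x + cdf μ x * cdf ν x -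
              2 * (cdf μ x * cdf ν x * cdf ρ x))
        else 0 := by
      intro x
      rw [hb' x, triple_formula _ _ _ x (cdf_nonneg μ x) (cdf_le_one μ x)
        (cdf_nonneg ν x) (cdf_le_one ν x) (cdf_nonneg ρ x) (cdf_le_one ρ x)]
    refine ⟨Measure.eq_of_cdf b d (StieltjesFunction.ext fun x => ?_), hbform⟩
    rw [hbform x, hd' x, triple_formula _ _ _ x (cdf_nonneg ν x) (cdf_le_one ν x)
      (cdf_nonneg ρ x) (cdf_le_one ρ x) (cdf_nonneg μ x) (cdf_le_one μ x)]
    split_ifs with h1 h2 h3 <;> try tauto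
    ring_nf
end
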